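/- Let H be a complex Hilbert space and let A, B be bounded linear operators on H such that A B* = 0 and B* A = 0 (where X* denotes the Hilbert-space adjoint). Then ‖A + B‖ = max(‖A‖, ‖B‖), where ‖·‖ is the operator norm. -/

import Mathlib

open ContinuousLinearMap
open scoped InnerProductSpace

/-! `B* A = 0` makes the ranges of `A` and `B` orthogonal, so `‖(A + B) ξ‖² = ‖A ξ‖² + ‖B ξ‖²`;
this gives `max ‖A‖ ‖B‖ ≤ ‖A + B‖`. Since `A B* = 0`, `A` vanishes on
`(ker B)ᗮ = closure (range B*)`, while `B` vanishes on `ker B`. Splitting `ξ = p + q` along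
`ker B ⊕ (ker B)ᗮ` thus gives `‖(A + B) ξ‖² = ‖A p‖² + ‖B q‖² ≤ (max ‖A‖ ‖B‖)² ‖ξ‖²`. -/

namespace ContinuousLinearMap

theorem opNorm_le_opNorm_of_norm_apply_le {𝕜 E F G : Type*} [NontriviallyNormedField 𝕜]
    [SeminormedAddCommGroup E] [NormedSpace 𝕜 E] [SeminormedAddCommGroup F] [NormedSpace 𝕜 F]
    [SeminormedAddCommGroup G] [NormedSpace 𝕜 G] {S : E →L[𝕜] F} {T : E →L[𝕜] G}
    (h : ∀ x, ‖S x‖ ≤ ‖T x‖) : ‖S‖ ≤ ‖T‖ :=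
  S.opNorm_le_bound (norm_nonneg T) fun x => (h x).trans (T.le_opNorm x)

variable {𝕜 E F : Type*} [RCLike 𝕜] [NormedAddCommGroup E] [InnerProductSpace 𝕜 E]
  [CompleteSpace E] [NormedAddCommGroup F] [InnerProductSpace 𝕜 F] [CompleteSpace F]
  {A B : E →L[𝕜] F}

theorem inner_apply_eq_zero_of_adjoint_comp_eq_zero (h : adjoint B ∘L A = 0) (x y : E) :
    ⟪A x, B y⟫_𝕜 = 0 := by
  rw [inner_eq_zero_symm, ← adjoint_inner_right, ← comp_apply, h, zero_apply, inner_zero_right]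

theorem norm_add_apply_sq_of_adjoint_comp_eq_zero (h : adjoint B ∘L A = 0) (x : E) :
    ‖(A + B) x‖ ^ 2 = ‖A x‖ ^ 2 + ‖B x‖ ^ 2 := by
  simpa only [add_apply, sq] using norm_add_sq_eq_norm_sq_add_norm_sq_of_inner_eq_zero _ _
    (inner_apply_eq_zero_of_adjoint_comp_eq_zero h x x)

theorem max_norm_le_norm_add_of_adjoint_comp_eq_zero (h : adjoint B ∘L A = 0) :
    max ‖A‖ ‖B‖ ≤ ‖A + B‖ := by
  have hsq := norm_add_apply_sq_of_adjoint_comp_eq_zero h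
  refine max_le (opNorm_le_opNorm_of_norm_apply_le fun x => ?_)
    (opNorm_le_opNorm_of_norm_apply_le fun x => ?_) <;>
  refine (pow_le_pow_iff_left₀ (norm_nonneg _) (norm_nonneg _) two_ne_zero).mp ?_ <;>
  rw [hsq x]
  exacts [le_add_of_nonneg_right (sq_nonneg _), le_add_of_nonneg_left (sq_nonneg _)]

theorem apply_eq_zero_of_mem_orthogonal_ker (h : A ∘L adjoint B = 0) {x : E}
    (hx : x ∈ B.kerᗮ) : A x = 0 := by
  have hrange : (adjoint B).range ≤ A.ker := by
    rintro _ ⟨y, rfl⟩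
    exact congr($h y)
  rw [orthogonal_ker] at hx
  exact Submodule.topologicalClosure_minimal _ hrange A.isClosed_ker hx

theorem norm_add_le_max_of_comp_adjoint_eq_zero (h₁ : A ∘L adjoint B = 0)
    (h₂ : adjoint B ∘L A = 0) : ‖A + B‖ ≤ max ‖A‖ ‖B‖ := by
  set M := max ‖A‖ ‖B‖
  have hM : 0 ≤ M := (norm_nonneg A).trans (le_max_left _ _)
  refine opNorm_le_bound _ hM fun x => ?_
  obtain ⟨p, hp, q, hq, rfl⟩ := B.ker.exists_add_mem_mem_orthogonal x
  have hpq : ‖p + q‖ ^ 2 = ‖p‖ ^ 2 + ‖q‖ ^ 2 := by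
    simpa only [sq] using norm_add_sq_eq_norm_sq_add_norm_sq_of_inner_eq_zero p q (hq p hp)
  refine (pow_le_pow_iff_left₀ (norm_nonneg _) (by positivity) two_ne_zero).mp ?_
  calc ‖(A + B) (p + q)‖ ^ 2 = ‖A p‖ ^ 2 + ‖B q‖ ^ 2 := by
        rw [norm_add_apply_sq_of_adjoint_comp_eq_zero h₂, map_add, map_add,
          apply_eq_zero_of_mem_orthogonal_ker h₁ hq, show B p = 0 from hp, add_zero, zero_add]
    _ ≤ (‖A‖ * ‖p‖) ^ 2 + (‖B‖ * ‖q‖) ^ 2 := by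
        gcongr
        exacts [A.le_opNorm p, B.le_opNorm q]
    _ ≤ (M * ‖p‖) ^ 2 + (M * ‖q‖) ^ 2 := by
        gcongr
        exacts [le_max_left _ _, le_max_right _ _]
    _ = (M * ‖p + q‖) ^ 2 := by linear_combination -M ^ 2 * hpq

end ContinuousLinearMap

/-- If `A B* = 0` and `B* A = 0`, then `‖A + B‖ = max ‖A‖ ‖B‖`. -/
theorem norm_add_eq_max_of_mul_adjoint_eq_zero
    {H : Type*} [NormedAddCommGroup H] [InnerProductSpace ℂ H] [CompleteSpace H]
    (A B : H →L[ℂ] H)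
    (h₁ : A ∘L ContinuousLinearMap.adjoint B = 0)
    (h₂ : ContinuousLinearMap.adjoint B ∘L A = 0) :
    ‖A + B‖ = max ‖A‖ ‖B‖ :=
  le_antisymm (norm_add_le_max_of_comp_adjoint_eq_zero h₁ h₂)
    (max_norm_le_norm_add_of_adjoint_comp_eq_zero h₂)
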